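/- Let (R, m, k) be an F-finite reduced F-pure local ring of characteristic p. Then dim(R/P(R)) = 0 if and only if P(R) = m if and only if sdim(R) = 0, and in this case the Frobenius splitting ratio r_F(R) exists and equals 1 (equivalently, a_q = q^{α(R)} for all q). -/

import Mathlib

set_option linter.unusedVariables false

open TensorProduct Filter IsLocalRing

section Defs

variable (R : Type*) [CommRing R] (p : ℕ) [Fact p.Prime] [CharP R p]

/-- `M` with the `R`-action twisted by the `e`-th Frobenius: `r • m = r^{p^e} • m`.
For `M = R` this is the module `R^{(e)} ≅ R^{1/p^e}`. -/
def Twist (R : Type*) (p : ℕ) (M : Type*) (e : ℕ) : Type _ := M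

instance (M : Type*) [AddCommGroup M] (e : ℕ) : AddCommGroup (Twist R p M e) :=
  inferInstanceAs (AddCommGroup M)

instance (M : Type*) [AddCommGroup M] [Module R M] (e : ℕ) : Module R (Twist R p M e) where
  smul r m := (r ^ p ^ e • (show M from m) : M)
  one_smul m := by
    change (1 : R) ^ p ^ e • (show M from m) = (show M from m)
    exact (congrArg (fun x : R => x • (show M from m)) (one_pow (p ^ e))).trans
      (one_smul R (show M from m))
  mul_smul a b m := by
    change (a * b) ^ p ^ e • (show M from m) =
      a ^ p ^ e • (b ^ p ^ e • (show M from m))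
    rw [mul_pow, mul_smul]
  smul_zero r := by
    change r ^ p ^ e • (0 : M) = (0 : M); simp
  smul_add r x y := by
    change r ^ p ^ e • ((show M from x) + (show M from y)) =
      r ^ p ^ e • (show M from x) + r ^ p ^ e • (show M from y)
    rw [smul_add]
  add_smul a b m := by
    change (a + b) ^ p ^ e • (show M from m) =
      a ^ p ^ e • (show M from m) + b ^ p ^ e • (show M from m)
    rw [add_pow_char_pow, add_smul]
  zero_smul m := by
    change (0 : R) ^ p ^ e • (show M from m) = (0 : M)
    rw [zero_pow (pow_ne_zero e (Fact.out : p.Prime).ne_zero), zero_smul]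

/-- The identity map `M → Twist R p M e`. -/
def toTwist (R : Type*) (p : ℕ) {M : Type*} (m : M) (e : ℕ) : Twist R p M e := m

/-- The map `φ_{c,e} : R → R^{1/p^e}`, `1 ↦ c^{1/p^e}`, splits over `R`. -/
def SplitsFrob (c : R) (e : ℕ) : Prop :=
  ∃ ψ : Twist R p R e →ₗ[R] R, ψ (toTwist R p c e) = 1

/-- The splitting prime `𝒫(R)`. -/
def SplittingPrimeSet : Set R := { c | ∀ᶠ e in atTop, ¬ SplitsFrob R p c e }

/-- `R` is `F`-pure: `R → R^{1/p}` splits. -/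
def IsFPure : Prop := SplitsFrob R p 1 1

/-- `R` is `F`-finite: `R^{1/p}` is a finite `R`-module. -/
def IsFFinite : Prop := Module.Finite R (Twist R p R 1)

/-- `R` is strongly `F`-regular. -/
def StronglyFRegular : Prop :=
  ∀ c : R, (∀ Q ∈ minimalPrimes R, c ∉ Q) → ∃ e, SplitsFrob R p c e

/-- `n` is the maximal rank of a free direct summand of `M`:
`M ≅ R^n ⊕ N` with `N` having no nonzero free direct summand. -/
def MaxFreeRank (M : Type*) [AddCommGroup M] [Module R M] (n : ℕ) : Prop :=
  ∃ (N : Submodule R M) (_ : M ≃ₗ[R] ((Fin n → R) × N)),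
    ¬ ∃ g : N →ₗ[R] R, Function.Surjective g

end Defs

section Hull

variable (R : Type*) [CommRing R] [IsLocalRing R]

/-- `E` is an injective hull of the residue field, with socle generator `u`. -/
def IsInjHullSocle (E : Type*) [AddCommGroup E] [Module R E] (u : E) : Prop :=
  Module.Injective R E ∧ u ≠ 0 ∧ (∀ r ∈ maximalIdeal R, r • u = 0) ∧
    (∀ x : E, (∀ r ∈ maximalIdeal R, r • x = 0) → x ∈ Submodule.span R {u}) ∧
    ∀ N : Submodule R E, N ≠ ⊥ → u ∈ N

end Hull

section Ae

variable (R : Type*) [CommRing R] (p : ℕ) [Fact p.Prime] [CharP R p]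

/-- The ideal `A_e = {r ∈ R : r ⊗ u = 0 in R^{(e)} ⊗_R E}`. -/
def AeSet (E : Type*) [AddCommGroup E] [Module R E] (u : E) (e : ℕ) : Set R :=
  { r | (toTwist R p r e ⊗ₜ[R] u : Twist R p R e ⊗[R] E) = 0 }

end Ae

/-- The length of a module, as the Krull dimension of its lattice of submodules. -/
noncomputable def moduleLength (R M : Type*) [CommRing R] [AddCommGroup M] [Module R M] :
    WithBot ℕ∞ := Order.krullDim (Submodule R M)

/-- A regular local ring: the maximal ideal is generated by `dim R` elements. -/
def IsRegularLocal (R : Type*) [CommRing R] [IsLocalRing R] : Prop :=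
  IsNoetherianRing R ∧ ∃ s : Finset R,
    Ideal.span (s : Set R) = maximalIdeal R ∧ (s.card : WithBot ℕ∞) = ringKrullDim R

set_option linter.unusedSectionVars false

section AEAux

variable {R : Type*} [CommRing R] [IsLocalRing R] {p : ℕ} [Fact p.Prime] [CharP R p]

namespace AEAux

lemma tw_smul {e : ℕ} (r : R) (x : Twist R p R e) :
    r • x = toTwist R p (r ^ p ^ e * (show R from x)) e := rfl

/-- Multiplication by a constant is linear on any twist. -/
def mulTw (s : R) (e : ℕ) : Twist R p R e →ₗ[R] Twist R p R e where
  toFun x := toTwist R p (s * (show R from x)) e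
  map_add' x y := mul_add s x y
  map_smul' r x := by
    show (s * (r ^ p ^ e * (show R from x)) : R) = (r ^ p ^ e * (s * (show R from x)) : R)
    ring

lemma apply_pow_mul {e : ℕ} (ψ : Twist R p R e →ₗ[R] R) (r : R) (y : R) :
    ψ (toTwist R p (r ^ p ^ e * y) e) = r * ψ (toTwist R p y e) := by
  have h := ψ.map_smul r (toTwist R p y e)
  rw [tw_smul] at h
  rw [smul_eq_mul] at h
  exact h

/-- A splitting at level `e` induces one `Twist (e+e') → Twist e'`. -/
def shiftHom {e : ℕ} (ψ : Twist R p R e →ₗ[R] R) (e' : ℕ) :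
    Twist R p R (e + e') →ₗ[R] Twist R p R e' where
  toFun x := toTwist R p (ψ (toTwist R p (show R from x) e)) e'
  map_add' x y := ψ.map_add x y
  map_smul' r x := by
    show ψ (toTwist R p (r ^ p ^ (e + e') * (show R from x)) e)
        = (r ^ p ^ e' * (ψ (toTwist R p (show R from x) e)) : R)
    have hp : r ^ p ^ (e + e') = (r ^ p ^ e') ^ p ^ e := by
      rw [← pow_mul, ← pow_add, Nat.add_comm e e']
    rw [hp, apply_pow_mul]

/-- The same map, for `e = 1`, `Twist (e+1) → Twist e`. -/
def shift1 (θ : Twist R p R 1 →ₗ[R] R) (e : ℕ) :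
    Twist R p R (e + 1) →ₗ[R] Twist R p R e where
  toFun x := toTwist R p (θ (toTwist R p (show R from x) 1)) e
  map_add' x y := θ.map_add x y
  map_smul' r x := by
    show θ (toTwist R p (r ^ p ^ (e + 1) * (show R from x)) 1)
        = (r ^ p ^ e * (θ (toTwist R p (show R from x) 1)) : R)
    have hp : r ^ p ^ (e + 1) = (r ^ p ^ e) ^ p ^ 1 := by
      rw [← pow_mul, ← pow_add]
    rw [hp, apply_pow_mul]

/-- Iterate of an `F`-splitting. -/
noncomputable def iterHom (θ : Twist R p R 1 →ₗ[R] R) : ∀ e, Twist R p R e →ₗ[R] R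
  | 0 =>
    { toFun := fun x => (show R from x)
      map_add' := fun x y => rfl
      map_smul' := fun r x => by
        show (r ^ p ^ 0 * (show R from x) : R) = r * (show R from x)
        rw [pow_zero, pow_one]
      }
  | (e + 1) => (iterHom θ e) ∘ₗ shift1 θ e

lemma iterHom_one (θ : Twist R p R 1 →ₗ[R] R)
    (hθ : θ (toTwist R p (1 : R) 1) = 1) (e : ℕ) :
    iterHom θ e (toTwist R p (1 : R) e) = 1 := by
  induction e with
  | zero => rfl
  | succ e ih =>
      show iterHom θ e (toTwist R p (θ (toTwist R p (1:R) 1)) e) = 1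
      rw [hθ]; exact ih

/-- The non-splitting ideal `I_e ⊆ R`, as a submodule of the twist. -/
def Ie (R : Type*) [CommRing R] [IsLocalRing R] (p : ℕ) [Fact p.Prime] [CharP R p] (e : ℕ) :
    Submodule R (Twist R p R e) where
  carrier := {x | ∀ ψ : Twist R p R e →ₗ[R] R, ψ x ∈ maximalIdeal R}
  add_mem' {x y} hx hy := fun ψ => by
    rw [map_add]; exact add_mem (hx ψ) (hy ψ)
  zero_mem' := fun ψ => by rw [map_zero]; exact zero_mem _
  smul_mem' r x hx := fun ψ => by
    rw [ψ.map_smul]; exact Ideal.mul_mem_left _ r (hx ψ)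

lemma mul_mem_Ie {e : ℕ} (s : R) {x : Twist R p R e} (hx : x ∈ Ie R p e) :
    toTwist R p (s * (show R from x)) e ∈ Ie R p e :=
  fun ψ => hx (ψ ∘ₗ mulTw s e)

lemma mul_mem_Ie' {e : ℕ} (s y : R) (hy : toTwist R p y e ∈ Ie R p e) :
    toTwist R p (s * y) e ∈ Ie R p e := mul_mem_Ie s hy

lemma pow_mul_mem_Ie {e : ℕ} {r : R} (hr : r ∈ maximalIdeal R) (x : R) :
    toTwist R p (r ^ p ^ e * x) e ∈ Ie R p e := fun ψ => by
  rw [apply_pow_mul ψ r x]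
  exact Ideal.mul_mem_right _ _ hr

lemma one_not_mem_max : (1 : R) ∉ maximalIdeal R :=
  (Ideal.ne_top_iff_one _).1 (Ideal.IsMaximal.ne_top (IsLocalRing.maximalIdeal.isMaximal R))

lemma unit_not_mem_Ie (θ : Twist R p R 1 →ₗ[R] R)
    (hθ : θ (toTwist R p (1 : R) 1) = 1) {e : ℕ} {x : R}
    (hx : x ∉ maximalIdeal R) : toTwist R p x e ∉ Ie R p e := by
  have hu : IsUnit x := by
    by_contra h
    exact hx (IsLocalRing.mem_maximalIdeal x |>.2 h)
  intro hmem
  have h2 := hmem ((iterHom θ e) ∘ₗ mulTw (↑hu.unit⁻¹) e)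
  have hval : ((iterHom θ e) ∘ₗ mulTw (↑hu.unit⁻¹) e) (toTwist R p x e) = 1 := by
    show iterHom θ e (toTwist R p ((↑hu.unit⁻¹ : R) * x) e) = 1
    rw [IsUnit.val_inv_mul]
    exact iterHom_one θ hθ e
  rw [hval] at h2
  exact one_not_mem_max h2

lemma Ie_le_max (θ : Twist R p R 1 →ₗ[R] R)
    (hθ : θ (toTwist R p (1 : R) 1) = 1) {e : ℕ} {x : R}
    (hx : toTwist R p x e ∈ Ie R p e) : x ∈ maximalIdeal R := by
  by_contra h
  exact unit_not_mem_Ie θ hθ h hx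

lemma exists_eq_one_of_not_mem_Ie {e : ℕ} {x : Twist R p R e} (hx : x ∉ Ie R p e) :
    ∃ ψ : Twist R p R e →ₗ[R] R, ψ x = 1 := by
  simp only [Ie, Submodule.mem_mk, AddSubmonoid.mem_mk, AddSubsemigroup.mem_mk,
    Set.mem_setOf_eq, not_forall] at hx
  obtain ⟨ψ, hψ⟩ := hx
  have hu : IsUnit (ψ x) := by
    by_contra h
    exact hψ (IsLocalRing.mem_maximalIdeal _ |>.2 h)
  refine ⟨(↑hu.unit⁻¹ : R) • ψ, ?_⟩
  rw [LinearMap.smul_apply, smul_eq_mul, IsUnit.val_inv_mul]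

lemma splits_iff_not_mem {e : ℕ} {c : R} :
    SplitsFrob R p c e ↔ toTwist R p c e ∉ Ie R p e := by
  constructor
  · rintro ⟨ψ, hψ⟩ hmem
    have h2 := hmem ψ
    rw [hψ] at h2
    exact one_not_mem_max h2
  · intro h
    exact exists_eq_one_of_not_mem_Ie h

end AEAux

end AEAux

section AEAux2

variable {R : Type*} [CommRing R] [IsLocalRing R] {p : ℕ} [Fact p.Prime] [CharP R p]

namespace AEAux

lemma not_mem_Ie_succ (θ : Twist R p R 1 →ₗ[R] R)
    (hθ : θ (toTwist R p (1 : R) 1) = 1) {e : ℕ} {x : R}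
    (hx : toTwist R p x e ∉ Ie R p e) : toTwist R p x (e + 1) ∉ Ie R p (e + 1) := by
  obtain ⟨ψ, hψ⟩ := exists_eq_one_of_not_mem_Ie hx
  intro hmem
  have h2 := hmem (ψ ∘ₗ (shift1 θ e ∘ₗ mulTw (x ^ (p - 1)) (e + 1)))
  have hval : (ψ ∘ₗ (shift1 θ e ∘ₗ mulTw (x ^ (p - 1)) (e + 1)))
      (toTwist R p x (e + 1)) = 1 := by
    show ψ (toTwist R p (θ (toTwist R p (x ^ (p - 1) * x) 1)) e) = 1
    have hxp : x ^ (p - 1) * x = x ^ p ^ 1 * 1 := by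
      rw [mul_one, pow_one, ← pow_succ, Nat.sub_add_cancel (Fact.out : p.Prime).one_lt.le]
    rw [hxp, apply_pow_mul θ x 1, hθ, mul_one]
    exact hψ
  rw [hval] at h2
  exact one_not_mem_max h2

lemma not_mem_Ie_of_le (θ : Twist R p R 1 →ₗ[R] R)
    (hθ : θ (toTwist R p (1 : R) 1) = 1) {e e' : ℕ} (h : e ≤ e') {x : R}
    (hx : toTwist R p x e ∉ Ie R p e) : toTwist R p x e' ∉ Ie R p e' := by
  induction e', h using Nat.le_induction with
  | base => exact hx
  | succ e' he' ih => exact not_mem_Ie_succ θ hθ ih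

lemma not_mem_Ie_mul (θ : Twist R p R 1 →ₗ[R] R) {e e' : ℕ} {x y : R}
    (hx : toTwist R p x e ∉ Ie R p e) (hy : toTwist R p y e' ∉ Ie R p e') :
    toTwist R p (x * y) (e + e') ∉ Ie R p (e + e') := by
  obtain ⟨ψ, hψ⟩ := exists_eq_one_of_not_mem_Ie hx
  obtain ⟨φ, hφ⟩ := exists_eq_one_of_not_mem_Ie hy
  intro hmem
  have h2 := hmem (φ ∘ₗ (shiftHom ψ e' ∘ₗ mulTw (y ^ (p ^ e - 1)) (e + e')))
  have harg : y ^ (p ^ e - 1) * (x * y) = y ^ p ^ e * x := by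
    have h1 : y ^ (p ^ e - 1) * y = y ^ p ^ e := by
      rw [← pow_succ, Nat.sub_add_cancel (Nat.one_le_pow _ _ (Fact.out : p.Prime).pos)]
    calc y ^ (p ^ e - 1) * (x * y) = (y ^ (p ^ e - 1) * y) * x := by ring
    _ = y ^ p ^ e * x := by rw [h1]
  have hval : (φ ∘ₗ (shiftHom ψ e' ∘ₗ mulTw (y ^ (p ^ e - 1)) (e + e')))
      (toTwist R p (x * y) (e + e')) = 1 := by
    show φ (toTwist R p (ψ (toTwist R p (y ^ (p ^ e - 1) * (x * y)) e)) e') = 1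
    rw [harg, apply_pow_mul ψ y x, hψ, mul_one]
    exact hφ
  rw [hval] at h2
  exact one_not_mem_max h2

lemma mem_P_iff (θ : Twist R p R 1 →ₗ[R] R)
    (hθ : θ (toTwist R p (1 : R) 1) = 1) {c : R} :
    c ∈ SplittingPrimeSet R p ↔ ∀ e, toTwist R p c e ∈ Ie R p e := by
  constructor
  · intro h e
    rw [SplittingPrimeSet, Set.mem_setOf_eq, Filter.eventually_atTop] at h
    obtain ⟨E, hE⟩ := h
    by_contra hne
    have : toTwist R p c (max e E) ∈ Ie R p (max e E) → False :=
      fun hm => not_mem_Ie_of_le θ hθ (le_max_left e E) hne hm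
    exact this (by
      by_contra hne2
      exact hE (max e E) (le_max_right e E) (splits_iff_not_mem.2 hne2))
  · intro h
    rw [SplittingPrimeSet, Set.mem_setOf_eq]
    exact Filter.Eventually.of_forall fun e hs => (splits_iff_not_mem.1 hs) (h e)

lemma one_not_mem_P (θ : Twist R p R 1 →ₗ[R] R)
    (hθ : θ (toTwist R p (1 : R) 1) = 1) :
    (1 : R) ∉ SplittingPrimeSet R p := by
  rw [mem_P_iff θ hθ]
  push_neg
  exact ⟨0, unit_not_mem_Ie θ hθ one_not_mem_max⟩

/-- The splitting prime ideal is prime. -/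
lemma I_isPrime (θ : Twist R p R 1 →ₗ[R] R)
    (hθ : θ (toTwist R p (1 : R) 1) = 1) (I : Ideal R)
    (hI : (I : Set R) = SplittingPrimeSet R p) : I.IsPrime := by
  have hmem : ∀ x : R, x ∈ I ↔ x ∈ SplittingPrimeSet R p := fun x => by
    rw [← hI]; rfl
  constructor
  · intro htop
    have h1 : (1 : R) ∈ I := htop ▸ Submodule.mem_top
    exact one_not_mem_P θ hθ ((hmem 1).1 h1)
  · intro x y hxy
    by_contra hc
    push_neg at hc
    obtain ⟨hxI, hyI⟩ := hc
    have hx := (hmem x).not.1 hxI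
    have hy := (hmem y).not.1 hyI
    rw [mem_P_iff θ hθ] at hx hy
    push_neg at hx hy
    obtain ⟨e, he⟩ := hx
    obtain ⟨e', he'⟩ := hy
    have := not_mem_Ie_mul θ he he'
    exact this (((mem_P_iff θ hθ).1 ((hmem _).1 hxy)) (e + e'))

end AEAux

end AEAux2
section AEAux3

variable {R : Type*} [CommRing R] [IsLocalRing R] {p : ℕ} [Fact p.Prime] [CharP R p]

namespace AEAux

/-- Any linear functional on `R^n` maps tuples with entries in `m` into `m`. -/
lemma pi_map_mem_max {n : ℕ} (f : (Fin n → R) →ₗ[R] R) {u : Fin n → R}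
    (hu : ∀ i, u i ∈ maximalIdeal R) : f u ∈ maximalIdeal R := by
  have hrepr : u = ∑ i, Pi.single i (u i) := (Finset.univ_sum_single u).symm
  rw [hrepr, map_sum]
  refine Ideal.sum_mem _ fun i _ => ?_
  have hs : Pi.single i (u i) = u i • (Pi.single i 1 : Fin n → R) := by
    ext j
    by_cases h : i = j
    · subst h; simp
    · simp [Pi.single_apply, h]
  rw [hs, f.map_smul, smul_eq_mul]
  exact Ideal.mul_mem_right _ _ (hu i)

lemma res_smul' (r : R) (z : ResidueField R) : r • z = IsLocalRing.residue R r * z := by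
  rw [Algebra.smul_def, IsLocalRing.ResidueField.algebraMap_eq]

/-- The residue map as an `R`-linear map. -/
noncomputable def resLin : R →ₗ[R] ResidueField R where
  toFun := IsLocalRing.residue R
  map_add' x y := map_add _ x y
  map_smul' r x := by
    show IsLocalRing.residue R (r • x) = r • IsLocalRing.residue R x
    rw [smul_eq_mul, map_mul, res_smul']

lemma resLin_surjective : Function.Surjective (resLin (R := R)) :=
  IsLocalRing.residue_surjective

lemma resLin_eq_zero_iff (x : R) : resLin x = 0 ↔ x ∈ maximalIdeal R :=
  IsLocalRing.residue_eq_zero_iff x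

/-- The key structural lemma: the quotient of the twist by `I_e` is free of
rank `n` over the residue field, where `n` is the maximal free rank. -/
lemma exists_quot_equiv_pi {e n : ℕ} (hfr : MaxFreeRank R (Twist R p R e) n) :
    Nonempty ((Twist R p R e ⧸ Ie R p e) ≃ₗ[R] (Fin n → ResidueField R)) := by
  obtain ⟨N, iso, hN⟩ := hfr
  set π : Twist R p R e →ₗ[R] (Fin n → ResidueField R) :=
    (LinearMap.pi fun i => resLin ∘ₗ LinearMap.proj i) ∘ₗ
      (LinearMap.fst R (Fin n → R) N) ∘ₗ iso.toLinearMap with hπ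
  have hπ_apply : ∀ x, π x = fun i => resLin ((iso x).1 i) := fun x => rfl
  have hsurj : Function.Surjective π := by
    intro v
    have : ∀ i, ∃ r : R, resLin r = v i :=
      fun i => resLin_surjective (v i)
    choose u hu using this
    refine ⟨iso.symm (u, 0), ?_⟩
    rw [hπ_apply]
    funext i
    rw [iso.apply_symm_apply]
    exact hu i
  have hker : LinearMap.ker π = Ie R p e := by
    apply le_antisymm
    · intro x hx ψ
      -- x with (iso x).1 i ∈ m for all i
      have hx1 : ∀ i, (iso x).1 i ∈ maximalIdeal R := by
        intro i
        have hx0 : π x = 0 := LinearMap.mem_ker.1 hx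
        have h2 := congrFun hx0 i
        simp only [hπ_apply, Pi.zero_apply] at h2
        rwa [resLin_eq_zero_iff] at h2
      have hdecomp : x = iso.symm ((iso x).1, 0) + iso.symm (0, (iso x).2) := by
        rw [← map_add, Prod.mk_add_mk, add_zero, zero_add]
        rw [← Prod.mk.eta (p := iso x), iso.symm_apply_apply]
      rw [hdecomp, map_add]
      refine add_mem ?_ ?_
      · -- first component: linear functional on R^n applied to tuple in m
        have := pi_map_mem_max
          (ψ ∘ₗ iso.symm.toLinearMap ∘ₗ LinearMap.inl R (Fin n → R) N) hx1
        exact this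
      · -- second component: map from N, not surjective, so range in m
        set g : N →ₗ[R] R := ψ ∘ₗ iso.symm.toLinearMap ∘ₗ LinearMap.inr R (Fin n → R) N
        have hgsurj : ¬ Function.Surjective g := fun hs => hN ⟨g, hs⟩
        have hrange : LinearMap.range g ≤ maximalIdeal R := by
          apply IsLocalRing.le_maximalIdeal
          rw [Ne, LinearMap.range_eq_top]
          exact hgsurj
        exact hrange ⟨(iso x).2, rfl⟩
    · intro x hx
      rw [LinearMap.mem_ker, hπ_apply]
      funext i
      have hmm : ((LinearMap.proj i) ∘ₗ (LinearMap.fst R (Fin n → R) N) ∘ₗ iso.toLinearMap) x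
          ∈ maximalIdeal R := hx _
      simp only [Pi.zero_apply]
      rw [resLin_eq_zero_iff]
      exact hmm
  exact ⟨(Submodule.quotEquivOfEq _ _ hker.symm).trans (π.quotKerEquivOfSurjective hsurj)⟩

end AEAux

end AEAux3
section AEAux4

namespace AEAux

variable {F : Type*} [Field F] {p : ℕ} [Fact p.Prime] [CharP F p]

/-- Transport of twists along a linear equivalence. -/
def twistCongr {M N : Type*} [AddCommGroup M] [Module F M] [AddCommGroup N] [Module F N]
    (f : M ≃ₗ[F] N) (e : ℕ) : Twist F p M e ≃ₗ[F] Twist F p N e where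
  toFun x := toTwist F p (f (show M from x)) e
  invFun y := toTwist F p (f.symm (show N from y)) e
  left_inv x := f.symm_apply_apply x
  right_inv y := f.apply_symm_apply y
  map_add' x y := f.map_add x y
  map_smul' r x := f.map_smul (r ^ p ^ e) x

/-- `Twist` at level `0` is trivial. -/
def twistZero : F ≃ₗ[F] Twist F p F 0 where
  toFun x := toTwist F p x 0
  invFun y := (show F from y)
  left_inv x := rfl
  right_inv y := rfl
  map_add' x y := rfl
  map_smul' r x := by
    show (r * x : F) = r ^ p ^ 0 * x
    rw [pow_zero, pow_one]

/-- `Twist` at level `e+1` as an `e`-twist of the `1`-twist. -/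
def twistSucc (e : ℕ) : Twist F p F (e + 1) ≃ₗ[F] Twist F p (Twist F p F 1) e where
  toFun x := x
  invFun y := y
  left_inv x := rfl
  right_inv y := rfl
  map_add' x y := rfl
  map_smul' r x := by
    show (r ^ p ^ (e + 1) * (show F from x) : F) = (r ^ p ^ e) ^ p ^ 1 * (show F from x)
    rw [← pow_mul, ← pow_add]

/-- `Twist` commutes with finite products. -/
def twistPi (n e : ℕ) : Twist F p (Fin n → F) e ≃ₗ[F] (Fin n → Twist F p F e) where
  toFun x := fun i => toTwist F p ((show Fin n → F from x) i) e
  invFun y := toTwist F p (fun i => (show F from y i)) e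
  left_inv x := rfl
  right_inv y := rfl
  map_add' x y := rfl
  map_smul' r x := rfl

/-- From `hα`, a basis of `F^{1/p}` over `F` of size `p^α`. -/
lemma exists_equiv_twist_one {α : ℕ}
    (hα : Module.finrank ((frobenius F p).fieldRange) F = p ^ α) :
    Nonempty ((Fin (p ^ α) → F) ≃ₗ[F] Twist F p F 1) := by
  set S := (frobenius F p).fieldRange
  haveI hfd : FiniteDimensional S F := by
    refine FiniteDimensional.of_finrank_pos ?_
    rw [hα]
    exact pow_pos (Fact.out : p.Prime).pos α
  have hcard : Module.finrank S F = p ^ α := hα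
  let b : Module.Basis (Fin (p ^ α)) S F := (Module.finBasis S F).reindex (finCongr hcard)
  -- the linear map (λ_i) ↦ ∑ λ_i^p • b_i
  let Φ : (Fin (p ^ α) → F) →ₗ[F] Twist F p F 1 :=
    { toFun := fun v => toTwist F p (∑ i, frobenius F p (v i) * b i) 1
      map_add' := fun v w => by
        show (∑ i, frobenius F p ((v + w) i) * b i : F)
            = (∑ i, frobenius F p (v i) * b i) + ∑ i, frobenius F p (w i) * b i
        rw [← Finset.sum_add_distrib]
        refine Finset.sum_congr rfl fun i _ => ?_
        rw [Pi.add_apply, map_add, add_mul]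
      map_smul' := fun c v => by
        show (∑ i, frobenius F p ((c • v) i) * b i : F)
            = c ^ p ^ 1 * ∑ i, frobenius F p (v i) * b i
        rw [Finset.mul_sum]
        refine Finset.sum_congr rfl fun i _ => ?_
        rw [Pi.smul_apply, smul_eq_mul, map_mul, frobenius_def, pow_one, mul_assoc]
      }
  have hinj : Function.Injective Φ := by
    rw [← LinearMap.ker_eq_bot, LinearMap.ker_eq_bot']
    intro v hv
    have hv' : (∑ i, frobenius F p (v i) * b i : F) = 0 := hv
    set g : Fin (p ^ α) → S := fun i => ⟨frobenius F p (v i), v i, rfl⟩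
    have hg : ∑ i, g i • b i = 0 := by
      rw [← hv']
      refine Finset.sum_congr rfl fun i _ => ?_
      rfl
    have := Fintype.linearIndependent_iff.1 b.linearIndependent g hg
    funext i
    have hgi := this i
    have : frobenius F p (v i) = 0 := by
      have := congrArg (Subtype.val) hgi
      exact this
    have h0 : frobenius F p (v i) = frobenius F p 0 := by rw [this, map_zero]
    exact frobenius_inj F p h0
  have hsurj : Function.Surjective Φ := by
    intro x
    have hrep := b.sum_repr (show F from x)
    have : ∀ i : Fin (p ^ α), ∃ y : F, frobenius F p y = (b.repr (show F from x) i : F) :=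
      fun i => (b.repr (show F from x) i).2
    choose v hv using this
    refine ⟨v, ?_⟩
    show (∑ i, frobenius F p (v i) * b i : F) = (show F from x)
    rw [← hrep]
    refine Finset.sum_congr rfl fun i _ => ?_
    rw [hv i]
    rfl
  exact ⟨LinearEquiv.ofBijective Φ ⟨hinj, hsurj⟩⟩

/-- The dimension of the `e`-th twist of the field. -/
lemma exists_equiv_twist {α : ℕ}
    (hα : Module.finrank ((frobenius F p).fieldRange) F = p ^ α) (e : ℕ) :
    Nonempty ((Fin (p ^ (e * α)) → F) ≃ₗ[F] Twist F p F e) := by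
  induction e with
  | zero =>
      refine ⟨?_⟩
      have h1 : p ^ (0 * α) = 1 := by rw [Nat.zero_mul, pow_zero]
      exact (LinearEquiv.funCongrLeft F F (finCongr h1).symm).trans
        ((LinearEquiv.funUnique (Fin 1) F F).trans twistZero)
  | succ e ih =>
      obtain ⟨Ee⟩ := ih
      obtain ⟨E1⟩ := exists_equiv_twist_one hα
      refine ⟨?_⟩
      -- (Fin (p^((e+1)α)) → F) ≃ (Fin (p^α × p^(eα)) → F) ≃ (Fin (p^α) → Fin (p^(eα)) → F)
      -- ≃ (Fin (p^α) → Twist e) ≃ Twist e (Fin (p^α) → F) ≃ Twist e (Twist 1) ≃ Twist (e+1)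
      have hmul : p ^ α * p ^ (e * α) = p ^ ((e + 1) * α) := by
        rw [← pow_add, Nat.succ_mul, Nat.add_comm (e * α) α]
      let idx : (Σ _ : Fin (p ^ α), Fin (p ^ (e * α))) ≃ Fin (p ^ ((e + 1) * α)) :=
        (Equiv.sigmaEquivProd (Fin (p ^ α)) (Fin (p ^ (e * α)))).trans
          (finProdFinEquiv.trans (finCongr hmul))
      exact (LinearEquiv.funCongrLeft F F idx) ≪≫ₗ
        (LinearEquiv.piCurry F (fun (_ : Fin (p ^ α)) (_ : Fin (p ^ (e * α))) => F)) ≪≫ₗ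
        (LinearEquiv.piCongrRight fun _ => Ee) ≪≫ₗ
        (twistPi (p ^ α) e).symm ≪≫ₗ (twistCongr E1 e) ≪≫ₗ (twistSucc e).symm

lemma finrank_twist {α : ℕ}
    (hα : Module.finrank ((frobenius F p).fieldRange) F = p ^ α) (e : ℕ) :
    Module.finrank F (Twist F p F e) = p ^ (e * α) := by
  obtain ⟨E⟩ := exists_equiv_twist hα e
  rw [← E.finrank_eq, Module.finrank_pi, Fintype.card_fin]

end AEAux

end AEAux4
section AEAux5

variable {R : Type*} [CommRing R] [IsLocalRing R] {p : ℕ} [Fact p.Prime] [CharP R p]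

namespace AEAux

/-- When `I_e = m`, the quotient of the twist by `I_e` is the twisted residue field. -/
lemma quotTwistEquiv {e : ℕ} (h : ∀ x : R, toTwist R p x e ∈ Ie R p e ↔ x ∈ maximalIdeal R) :
    Nonempty ((Twist R p R e ⧸ Ie R p e) ≃ₗ[R] Twist R p (ResidueField R) e) := by
  set κ : Twist R p R e →ₗ[R] Twist R p (ResidueField R) e :=
    { toFun := fun x => toTwist R p (IsLocalRing.residue R (show R from x)) e
      map_add' := fun x y => map_add _ x y
      map_smul' := fun r x => by
        show IsLocalRing.residue R (r ^ p ^ e * (show R from x))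
            = r ^ p ^ e • (IsLocalRing.residue R (show R from x))
        rw [map_mul, res_smul'] } with hκ
  have hsurj : Function.Surjective κ := fun z => by
    obtain ⟨x, hx⟩ := IsLocalRing.residue_surjective (R := R) (show ResidueField R from z)
    exact ⟨toTwist R p x e, hx⟩
  have hker : LinearMap.ker κ = Ie R p e := by
    ext x
    rw [LinearMap.mem_ker]
    have : κ x = 0 ↔ (show R from x) ∈ maximalIdeal R :=
      IsLocalRing.residue_eq_zero_iff _
    rw [this]
    exact (h (show R from x)).symm
  exact ⟨(Submodule.quotEquivOfEq _ _ hker.symm).trans (κ.quotKerEquivOfSurjective hsurj)⟩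

/-- Upgrade an `R`-linear equivalence to a residue-field-linear equivalence. -/
lemma upgrade [CharP (ResidueField R) p] {n e : ℕ}
    (f : (Fin n → ResidueField R) ≃ₗ[R] Twist R p (ResidueField R) e) :
    Nonempty ((Fin n → ResidueField R) ≃ₗ[ResidueField R]
      Twist (ResidueField R) p (ResidueField R) e) := by
  refine ⟨{ toFun := fun v => f v
            invFun := fun w => f.symm w
            left_inv := f.left_inv
            right_inv := f.right_inv
            map_add' := f.map_add
            map_smul' := ?_ }⟩
  intro c v
  obtain ⟨r, rfl⟩ := IsLocalRing.residue_surjective (R := R) c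
  have h1 : (IsLocalRing.residue R r) • v = r • v := by
    funext i
    rw [Pi.smul_apply, Pi.smul_apply, smul_eq_mul, ← res_smul']
  rw [RingHom.id_apply]
  show f ((IsLocalRing.residue R r) • v) = _
  rw [h1, f.map_smul]
  show r ^ p ^ e • (show ResidueField R from f v)
      = (IsLocalRing.residue R r) ^ p ^ e * (show ResidueField R from f v)
  rw [res_smul', map_pow]

/-- If `I_e = m`, the maximal free rank equals `p^{eα}`. -/
lemma rank_eq_of_Ie_eq_max [CharP (ResidueField R) p] {α : ℕ}
    (hα : Module.finrank ((frobenius (ResidueField R) p).fieldRange) (ResidueField R) = p ^ α)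
    {e n : ℕ} (hfr : MaxFreeRank R (Twist R p R e) n)
    (h : ∀ x : R, toTwist R p x e ∈ Ie R p e ↔ x ∈ maximalIdeal R) :
    n = p ^ (e * α) := by
  obtain ⟨E3⟩ := exists_quot_equiv_pi hfr
  obtain ⟨E4⟩ := quotTwistEquiv h
  obtain ⟨g⟩ := upgrade (E3.symm.trans E4)
  have hfr2 := g.finrank_eq
  rw [Module.finrank_pi, Fintype.card_fin, finrank_twist hα e] at hfr2
  exact hfr2

end AEAux

end AEAux5
section AEAux6

variable {R : Type*} [CommRing R] [IsLocalRing R] {p : ℕ} [Fact p.Prime] [CharP R p]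

namespace AEAux

/-- The key lower bound: if `c ∈ m` and `c^t ∉ I_e` then the free rank of the `e`-th
twist is at least `t·p^{eα}`. -/
lemma le_rank_of_pow_not_mem [CharP (ResidueField R) p] {α : ℕ}
    (hα : Module.finrank ((frobenius (ResidueField R) p).fieldRange) (ResidueField R) = p ^ α)
    {e n t : ℕ} (hfr : MaxFreeRank R (Twist R p R e) n) {c : R} (hc : c ∈ maximalIdeal R)
    (hct : toTwist R p (c ^ t) e ∉ Ie R p e) : t * p ^ (e * α) ≤ n := by
  classical
  set K := ResidueField R
  set N := p ^ (e * α) with hN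
  obtain ⟨E3⟩ := exists_quot_equiv_pi hfr
  obtain ⟨Ee⟩ := exists_equiv_twist (F := K) hα e
  set b : Fin N → K := fun i => (show K from Ee (Pi.single i 1)) with hb
  have hEeval : ∀ w : Fin N → K, (show K from Ee w) = ∑ i, w i ^ p ^ e * b i := by
    intro w
    have h1 : w = ∑ i, Pi.single i (w i) := (Finset.univ_sum_single w).symm
    have h2 : Ee w = ∑ i, Ee (Pi.single i (w i)) := by
      conv_lhs => rw [h1]
      exact map_sum Ee _ _
    rw [h2]
    show (∑ i, (show K from Ee (Pi.single i (w i))) : K) = _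
    refine Finset.sum_congr rfl fun i _ => ?_
    have hsingle : Pi.single i (w i) = w i • (Pi.single i 1 : Fin N → K) := by
      ext j
      by_cases h : i = j
      · subst h; simp
      · simp [Pi.single_apply, h]
    rw [hsingle, Ee.map_smul]
    show w i ^ p ^ e * (show K from Ee (Pi.single i 1)) = w i ^ p ^ e * b i
    rfl
  -- lifts of b
  have hblift : ∀ i, ∃ x : R, IsLocalRing.residue R x = b i :=
    fun i => IsLocalRing.residue_surjective (b i)
  choose β hβ using hblift
  -- the map ν
  set ν : R → (Fin n → K) := fun x => E3 (Submodule.Quotient.mk (toTwist R p x e)) with hν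
  have hν0 : ∀ x : R, ν x = 0 ↔ toTwist R p x e ∈ Ie R p e := by
    intro x
    rw [hν]
    simp only []
    rw [LinearEquiv.map_eq_zero_iff, Submodule.Quotient.mk_eq_zero]
  have hνadd : ∀ x y : R, ν (x + y) = ν x + ν y := by
    intro x y
    rw [hν]
    simp only []
    rw [← map_add]
    congr 1
  have hνzero : ν 0 = 0 := by
    rw [hν]
    simp only []
    rw [← map_zero E3]
    congr 1
  set νh : R →+ (Fin n → K) := { toFun := ν, map_zero' := hνzero, map_add' := hνadd }
  have hsmulpi : ∀ (s : R) (v : Fin n → K), s • v = IsLocalRing.residue R s • v := by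
    intro s v
    funext i
    rw [Pi.smul_apply, Pi.smul_apply, smul_eq_mul, res_smul']
  have hνsmul : ∀ (s x : R), ν (s ^ p ^ e * x) = IsLocalRing.residue R s • ν x := by
    intro s x
    have h1 : toTwist R p (s ^ p ^ e * x) e = s • toTwist R p x e :=
      (tw_smul s (toTwist R p x e)).symm
    rw [hν]
    simp only []
    rw [h1, Submodule.Quotient.mk_smul, E3.map_smul, hsmulpi]
  -- the family
  set W : Fin t × Fin N → (Fin n → K) := fun z => ν (c ^ (z.1 : ℕ) * β z.2) with hW
  have hli : LinearIndependent K W := by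
    rw [Fintype.linearIndependent_iff]
    intro g hg
    by_contra hgn
    push_neg at hgn
    obtain ⟨z₀, hz₀⟩ := hgn
    choose r hr using fun z => IsLocalRing.residue_surjective (R := R) (g z)
    set J := Finset.univ.filter (fun j : Fin t => ∃ i, g (j, i) ≠ 0) with hJ
    have hJne : J.Nonempty := by
      refine ⟨z₀.1, ?_⟩
      rw [hJ, Finset.mem_filter]
      exact ⟨Finset.mem_univ _, ⟨z₀.2, hz₀⟩⟩
    set j₀ := J.min' hJne with hj₀def
    have hj₀ : ∃ i, g (j₀, i) ≠ 0 := (Finset.mem_filter.1 (J.min'_mem hJne)).2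
    have hmin : ∀ z : Fin t × Fin N, z.1 < j₀ → g z = 0 := by
      intro z hz
      by_contra hne
      have hzJ : z.1 ∈ J := by
        rw [hJ, Finset.mem_filter]
        exact ⟨Finset.mem_univ _, ⟨z.2, by rw [Prod.mk.eta]; exact hne⟩⟩
      exact absurd (J.min'_le _ hzJ) (not_le.2 hz)
    -- the sum S
    set T : Fin t × Fin N → R := fun z => r z ^ p ^ e * (c ^ (z.1 : ℕ) * β z.2) with hT
    have hterm : ∀ z, ν (T z) = g z • W z := by
      intro z
      rw [hT]
      simp only []
      rw [hνsmul, hr]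
    have hS : toTwist R p (∑ z, T z) e ∈ Ie R p e := by
      rw [← hν0]
      have : ν (∑ z, T z) = ∑ z, ν (T z) := map_sum νh T Finset.univ
      rw [this]
      rw [Finset.sum_congr rfl fun z _ => hterm z]
      exact hg
    -- split the sum
    set A := Finset.univ.filter (fun z : Fin t × Fin N => z.1 < j₀) with hA
    have hAmem : toTwist R p (∑ z ∈ A, T z) e ∈ Ie R p e := by
      refine Submodule.sum_mem _ fun z hz => ?_
      have hz1 : z.1 < j₀ := (Finset.mem_filter.1 hz).2
      have hrm : r z ∈ maximalIdeal R := by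
        rw [← IsLocalRing.residue_eq_zero_iff, hr]
        exact hmin z hz1
      exact pow_mul_mem_Ie hrm _
    have hsplit : ∑ z ∈ A, T z + ∑ z ∈ Finset.univ.filter
        (fun z : Fin t × Fin N => ¬ z.1 < j₀), T z = ∑ z, T z := by
      rw [hA]
      exact Finset.sum_filter_add_sum_filter_not _ _ _
    have hrest : toTwist R p (∑ z ∈ Finset.univ.filter
        (fun z : Fin t × Fin N => ¬ z.1 < j₀), T z) e ∈ Ie R p e := by
      have h2 : (∑ z ∈ Finset.univ.filter (fun z : Fin t × Fin N => ¬ z.1 < j₀), T z)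
          = (∑ z, T z) - ∑ z ∈ A, T z := by
        rw [← hsplit]; ring
      rw [h2]
      exact sub_mem hS hAmem
    -- factor out c^{j₀}
    set U := ∑ z ∈ Finset.univ.filter (fun z : Fin t × Fin N => ¬ z.1 < j₀),
      r z ^ p ^ e * (c ^ ((z.1 : ℕ) - (j₀ : ℕ)) * β z.2) with hU
    have hfac : ∑ z ∈ Finset.univ.filter (fun z : Fin t × Fin N => ¬ z.1 < j₀), T z
        = c ^ (j₀ : ℕ) * U := by
      rw [hU, Finset.mul_sum]
      refine Finset.sum_congr rfl fun z hz => ?_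
      have hle : (j₀ : ℕ) ≤ (z.1 : ℕ) := by
        have := (Finset.mem_filter.1 hz).2
        exact Fin.le_def.1 (not_lt.1 this)
      rw [hT]
      simp only []
      have hcz : c ^ (z.1 : ℕ) = c ^ (j₀ : ℕ) * c ^ ((z.1 : ℕ) - (j₀ : ℕ)) := by
        rw [← pow_add, Nat.add_sub_cancel' hle]
      rw [hcz]; ring
    -- U is a unit
    have hresU : IsLocalRing.residue R U = (show K from Ee (fun i => g (j₀, i))) := by
      rw [hU, map_sum]
      have hterm2 : ∀ z ∈ Finset.univ.filter (fun z : Fin t × Fin N => ¬ z.1 < j₀),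
          IsLocalRing.residue R (r z ^ p ^ e * (c ^ ((z.1 : ℕ) - (j₀ : ℕ)) * β z.2))
          = if z.1 = j₀ then g z ^ p ^ e * b z.2 else 0 := by
        intro z hz
        have hle : (j₀ : ℕ) ≤ (z.1 : ℕ) := Fin.le_def.1 (not_lt.1 (Finset.mem_filter.1 hz).2)
        rw [map_mul, map_mul, map_pow, hr, hβ]
        by_cases hzj : z.1 = j₀
        · have : (z.1 : ℕ) - (j₀ : ℕ) = 0 := by rw [hzj]; exact Nat.sub_self _
          rw [if_pos hzj, this, pow_zero, map_one, one_mul]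
        · have hlt : (j₀ : ℕ) < (z.1 : ℕ) := by
            rcases Nat.lt_or_ge (j₀ : ℕ) (z.1 : ℕ) with h | h
            · exact h
            · exact absurd (Fin.ext (Nat.le_antisymm h hle) : z.1 = j₀) hzj
          have hsub : (z.1 : ℕ) - (j₀ : ℕ) ≠ 0 := Nat.sub_ne_zero_of_lt hlt
          have hc0 : IsLocalRing.residue R (c ^ ((z.1 : ℕ) - (j₀ : ℕ))) = 0 := by
            rw [map_pow]
            rw [show IsLocalRing.residue R c = 0 from
              (IsLocalRing.residue_eq_zero_iff c).2 hc]
            exact zero_pow hsub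
          rw [if_neg hzj, hc0, zero_mul, mul_zero]
      rw [Finset.sum_congr rfl hterm2]
      have hext : ∑ z ∈ Finset.univ.filter (fun z : Fin t × Fin N => ¬ z.1 < j₀),
          (if z.1 = j₀ then g z ^ p ^ e * b z.2 else 0)
          = ∑ z : Fin t × Fin N, (if z.1 = j₀ then g z ^ p ^ e * b z.2 else 0) := by
        rw [← Finset.sum_filter_add_sum_filter_not Finset.univ
          (fun z : Fin t × Fin N => z.1 < j₀) (fun z => if z.1 = j₀ then g z ^ p ^ e * b z.2 else 0)]
        have hzero : ∑ z ∈ Finset.univ.filter (fun z : Fin t × Fin N => z.1 < j₀),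
            (if z.1 = j₀ then g z ^ p ^ e * b z.2 else 0) = 0 := by
          refine Finset.sum_eq_zero fun z hz => ?_
          have : z.1 < j₀ := (Finset.mem_filter.1 hz).2
          rw [if_neg (fun (h : z.1 = j₀) => absurd (h ▸ this) (lt_irrefl j₀))]
        rw [hzero, zero_add]
      rw [hext, hEeval]
      rw [Fintype.sum_prod_type]
      have hswap : ∀ j : Fin t, ∑ i : Fin N,
          (if (j, i).1 = j₀ then g (j, i) ^ p ^ e * b (j, i).2 else 0)
          = if j = j₀ then (∑ i : Fin N, g (j, i) ^ p ^ e * b i) else 0 := by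
        intro j
        by_cases h : j = j₀
        · simp only [h, if_true]
        · simp only [h, if_false]
          exact Finset.sum_eq_zero fun i _ => by simp [h]
      rw [Finset.sum_congr rfl fun j _ => hswap j]
      simp
    have hUunit : IsUnit U := by
      rw [← IsLocalRing.residue_ne_zero_iff_isUnit, hresU]
      intro h0
      have : (fun i => g (j₀, i)) = 0 := by
        have := Ee.map_eq_zero_iff.1 h0
        exact this
      obtain ⟨i₀, hi₀⟩ := hj₀
      exact hi₀ (by rw [show g (j₀, i₀) = (fun i => g (j₀, i)) i₀ from rfl, this]; rfl)
    -- conclude c^{j₀} ∈ I_e, contradiction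
    have hcj : toTwist R p (c ^ (j₀ : ℕ)) e ∈ Ie R p e := by
      have h1 : toTwist R p (c ^ (j₀ : ℕ) * U) e ∈ Ie R p e := by
        rw [← hfac]; exact hrest
      have h2 := mul_mem_Ie' (↑hUunit.unit⁻¹ : R) _ h1
      have h3 : (↑hUunit.unit⁻¹ : R) * (c ^ (j₀ : ℕ) * U) = c ^ (j₀ : ℕ) := by
        rw [mul_comm (c ^ (j₀ : ℕ)) U, ← mul_assoc, IsUnit.val_inv_mul, one_mul]
      rw [h3] at h2
      exact h2
    have hct2 : toTwist R p (c ^ t) e ∈ Ie R p e := by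
      have h4 := mul_mem_Ie' (c ^ (t - (j₀ : ℕ))) _ hcj
      have h5 : c ^ (t - (j₀ : ℕ)) * c ^ (j₀ : ℕ) = c ^ t := by
        rw [← pow_add, Nat.sub_add_cancel (le_of_lt j₀.isLt)]
      rw [h5] at h4
      exact h4
    exact hct hct2
  -- from linear independence to the rank bound
  have hcard := hli.fintype_card_le_finrank
  rw [Fintype.card_prod, Fintype.card_fin, Fintype.card_fin] at hcard
  rw [Module.finrank_pi, Fintype.card_fin] at hcard
  exact hcard

end AEAux

end AEAux6

/-- For an F-finite reduced F-pure local ring `R` with splitting prime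
ideal `I`: `dim(R/I) = 0` iff `I = m` iff `sdim(R) = 0`, and in that case `a_q = q^{α(R)}`
for all `q` and the Frobenius splitting ratio exists and equals `1`. -/
theorem dim_zero_iff_splittingPrime_max_iff_sdim_zero
    (R : Type*) [CommRing R] [IsNoetherianRing R] [IsLocalRing R] [IsReduced R]
    (p : ℕ) [Fact p.Prime] [CharP R p] (hFF : IsFFinite R p)
    (hpure : IsFPure R p)
    (I : Ideal R) (hI : (I : Set R) = SplittingPrimeSet R p)
    (a : ℕ → ℕ) (ha : ∀ e, MaxFreeRank R (Twist R p R e) (a e))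
    [CharP (ResidueField R) p] (α : ℕ)
    (hα : Module.finrank ((frobenius (ResidueField R) p).fieldRange) (ResidueField R) = p ^ α) :
    (ringKrullDim (R ⧸ I) = 0 ↔ I = maximalIdeal R) ∧
    (I = maximalIdeal R ↔
      (0 < Filter.liminf (fun e => (a e : ℝ) / (p : ℝ) ^ (e * α)) Filter.atTop ∧
        ∀ j : ℕ,
          0 < Filter.liminf (fun e => (a e : ℝ) / (p : ℝ) ^ (e * (j + α))) Filter.atTop →
          j = 0)) ∧
    (I = maximalIdeal R →
      (∀ e, a e = p ^ (e * α)) ∧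
        Filter.Tendsto (fun e => (a e : ℝ) / (p : ℝ) ^ (e * α)) Filter.atTop (nhds 1)) := by
  classical
  obtain ⟨θ, hθ⟩ := hpure
  have hp1 : (1 : ℝ) < (p : ℝ) := by
    exact_mod_cast (Fact.out : p.Prime).one_lt
  have hp0 : (0 : ℝ) < (p : ℝ) := lt_trans one_pos hp1
  have hmemI : ∀ x : R, x ∈ I ↔ ∀ e, toTwist R p x e ∈ AEAux.Ie R p e := by
    intro x
    have h1 : x ∈ I ↔ x ∈ SplittingPrimeSet R p := by rw [← hI]; rfl
    rw [h1]
    exact AEAux.mem_P_iff θ hθ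
  have hIle : I ≤ maximalIdeal R := by
    apply IsLocalRing.le_maximalIdeal
    intro htop
    have h1 : (1 : R) ∈ I := htop ▸ Submodule.mem_top
    exact AEAux.unit_not_mem_Ie θ hθ AEAux.one_not_mem_max ((hmemI 1).1 h1 0)
  haveI hIprime : I.IsPrime := AEAux.I_isPrime θ hθ I hI
  -- Part C (the splitting numbers)
  have hC : I = maximalIdeal R → ∀ e, a e = p ^ (e * α) := by
    intro hIm e
    have hIe_eq : ∀ x : R, toTwist R p x e ∈ AEAux.Ie R p e ↔ x ∈ maximalIdeal R := by
      intro x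
      constructor
      · exact AEAux.Ie_le_max θ hθ
      · intro hx
        have hxI : x ∈ I := by rw [hIm]; exact hx
        exact (hmemI x).1 hxI e
    exact AEAux.rank_eq_of_Ie_eq_max hα (ha e) hIe_eq
  -- the normalized sequence is constant 1 when I = m
  have hconst : I = maximalIdeal R →
      (fun e => (a e : ℝ) / (p : ℝ) ^ (e * α)) = fun _ => (1 : ℝ) := by
    intro hIm
    funext e
    rw [hC hIm e]
    push_cast
    exact div_self (pow_ne_zero _ (ne_of_gt hp0))
  -- Part A
  have hA : ringKrullDim (R ⧸ I) = 0 ↔ I = maximalIdeal R := by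
    constructor
    · intro hdim
      by_contra hne
      obtain ⟨c, hcm, hcI⟩ : ∃ c, c ∈ maximalIdeal R ∧ c ∉ I := by
        by_contra h
        push_neg at h
        exact hne (le_antisymm hIle h)
      haveI : IsDomain (R ⧸ I) := Ideal.Quotient.isDomain I
      set x₀ : PrimeSpectrum (R ⧸ I) := ⟨⊥, Ideal.bot_prime⟩ with hx₀
      have hJprime : (Ideal.map (Ideal.Quotient.mk I) (maximalIdeal R)).IsPrime := by
        refine Ideal.map_isPrime_of_surjective Ideal.Quotient.mk_surjective ?_
        rw [Ideal.mk_ker]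
        exact hIle
      set x₁ : PrimeSpectrum (R ⧸ I) := ⟨Ideal.map (Ideal.Quotient.mk I) (maximalIdeal R),
        hJprime⟩ with hx₁
      have hmemc : Ideal.Quotient.mk I c ∈ x₁.asIdeal := Ideal.mem_map_of_mem _ hcm
      have hcne : Ideal.Quotient.mk I c ≠ 0 := by
        intro h0
        exact hcI (Ideal.Quotient.eq_zero_iff_mem.1 h0)
      have hlt : x₀ < x₁ := by
        refine lt_of_le_of_ne (show x₀.asIdeal ≤ x₁.asIdeal from bot_le) ?_
        intro heq
        have : x₁.asIdeal = ⊥ := by rw [← heq]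
        rw [this] at hmemc
        exact hcne (Submodule.mem_bot _ |>.1 hmemc)
      set P : LTSeries (PrimeSpectrum (R ⧸ I)) :=
        (RelSeries.singleton _ x₀).snoc x₁ hlt with hP
      have hlen := Order.LTSeries.length_le_krullDim P
      have hPlen : P.length = 1 := rfl
      rw [hPlen] at hlen
      have : (1 : WithBot (WithTop ℕ)) ≤ ringKrullDim (R ⧸ I) := hlen
      rw [hdim] at this
      exact absurd this (by change ¬ (1 : WithBot ℕ∞) ≤ 0; simp)
    · intro hIm
      rw [hIm]
      exact ringKrullDim_eq_zero_of_isField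
        ((Ideal.Quotient.maximal_ideal_iff_isField_quotient _).1
          (IsLocalRing.maximalIdeal.isMaximal R))
  -- Part B
  have hB : I = maximalIdeal R ↔
      (0 < Filter.liminf (fun e => (a e : ℝ) / (p : ℝ) ^ (e * α)) Filter.atTop ∧
        ∀ j : ℕ,
          0 < Filter.liminf (fun e => (a e : ℝ) / (p : ℝ) ^ (e * (j + α))) Filter.atTop →
          j = 0) := by
    constructor
    · intro hIm
      constructor
      · rw [hconst hIm, Filter.liminf_const]
        exact one_pos
      · intro j hj
        by_contra hjne
        have heq : (fun e => (a e : ℝ) / (p : ℝ) ^ (e * (j + α)))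
            = fun e => ((1 : ℝ) / (p : ℝ) ^ j) ^ e := by
          funext e
          rw [hC hIm e]
          push_cast
          rw [div_pow, one_pow, ← pow_mul]
          rw [show e * (j + α) = e * α + j * e by ring, pow_add]
          rw [div_mul_eq_div_div, div_self (pow_ne_zero _ (ne_of_gt hp0))]
        have hlt1 : (1 : ℝ) / (p : ℝ) ^ j < 1 := by
          rw [div_lt_one (pow_pos hp0 j)]
          exact one_lt_pow₀ hp1 hjne
        have hlim : Filter.Tendsto (fun e => ((1 : ℝ) / (p : ℝ) ^ j) ^ e)
            Filter.atTop (nhds 0) :=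
          tendsto_pow_atTop_nhds_zero_of_lt_one (by positivity) hlt1
        rw [heq, hlim.liminf_eq] at hj
        exact lt_irrefl 0 hj
    · rintro ⟨hpos, _⟩
      by_contra hne
      obtain ⟨c, hcm, hcI⟩ : ∃ c, c ∈ maximalIdeal R ∧ c ∉ I := by
        by_contra h
        push_neg at h
        exact hne (le_antisymm hIle h)
      obtain ⟨e₀, he₀⟩ : ∃ e₀, toTwist R p c e₀ ∉ AEAux.Ie R p e₀ := by
        by_contra h
        push_neg at h
        exact hcI ((hmemI c).2 h)
      have hgrow : Filter.Tendsto (fun e => (a e : ℝ) / (p : ℝ) ^ (e * α))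
          Filter.atTop Filter.atTop := by
        rw [Filter.tendsto_atTop]
        intro bb
        set t : ℕ := ⌈bb⌉₊ with ht
        have hbt : bb ≤ (t : ℝ) := Nat.le_ceil bb
        have hct : ∃ E, toTwist R p (c ^ t) E ∉ AEAux.Ie R p E := by
          clear hbt ht
          induction t with
          | zero =>
              exact ⟨0, by
                rw [pow_zero]
                exact AEAux.unit_not_mem_Ie θ hθ AEAux.one_not_mem_max⟩
          | succ t iht =>
              obtain ⟨E, hE⟩ := iht
              refine ⟨E + e₀, ?_⟩
              rw [pow_succ]
              exact AEAux.not_mem_Ie_mul θ hE he₀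
        obtain ⟨E, hE⟩ := hct
        filter_upwards [Filter.eventually_ge_atTop E] with e he
        have hnot : toTwist R p (c ^ t) e ∉ AEAux.Ie R p e :=
          AEAux.not_mem_Ie_of_le θ hθ he hE
        have hle := AEAux.le_rank_of_pow_not_mem hα (ha e) hcm hnot
        have hle2 : (t : ℝ) * (p : ℝ) ^ (e * α) ≤ (a e : ℝ) := by
          have : ((t * p ^ (e * α) : ℕ) : ℝ) ≤ ((a e : ℕ) : ℝ) := Nat.cast_le.2 hle
          push_cast at this
          exact this
        calc bb ≤ (t : ℝ) := hbt
        _ ≤ (a e : ℝ) / (p : ℝ) ^ (e * α) := by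
            rw [le_div_iff₀ (pow_pos hp0 _)]
            exact hle2
      have hzero : Filter.liminf (fun e => (a e : ℝ) / (p : ℝ) ^ (e * α))
          Filter.atTop = 0 := by
        rw [Filter.liminf_eq]
        have hset : {x : ℝ | ∀ᶠ e in Filter.atTop, x ≤ (a e : ℝ) / (p : ℝ) ^ (e * α)}
            = Set.univ := by
          ext x
          simp only [Set.mem_setOf_eq, Set.mem_univ, iff_true]
          exact hgrow.eventually_ge_atTop x
        rw [hset]
        exact Real.sSup_univ
      rw [hzero] at hpos
      exact lt_irrefl 0 hpos
  refine ⟨hA, hB, fun hIm => ⟨hC hIm, ?_⟩⟩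
  rw [hconst hIm]
  exact tendsto_const_nhds
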